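/- A binary word v is an abelian square if and only if there exists a word u such that v is a shuffle of u with its reversal u^R. Moreover, for an arbitrary finite alphabet, if v is a shuffle of some word u with its reversal u^R, then v is an abelian square. -/

import Mathlib

/-!
Cut `v`, a shuffle of `u` with `uᴿ`, after `|u|` letters. The first half interleaves a prefix
`x₁` of `u` with a prefix of `uᴿ` of length `|u| - |x₁|`, which is the reversal of the rest `x₂`
of `u`; the second half interleaves `x₂` with `x₁ᴿ`. So both halves are permutations of `u`.

Conversely, a binary word is a shuffle of its `0`s and its `1`s. If `v₁ v₂` is a binary abelian
square with `a` zeros and `b` ones in each half, then `v₁` shuffles `0ᵃ` with `1ᵇ` and `v₂`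
shuffles `1ᵇ` with `0ᵃ`, i.e. `v₁ v₂` shuffles `u = 0ᵃ 1ᵇ` with `1ᵇ 0ᵃ = uᴿ`.
-/

/-- `Shuffle x y v` holds if `v` can be obtained by interleaving `x` and `y`. -/
inductive Shuffle {α : Type*} : List α → List α → List α → Prop
  | nil : Shuffle [] [] []
  | left {a : α} {x y v : List α} : Shuffle x y v → Shuffle (a :: x) y (a :: v)
  | right {a : α} {x y v : List α} : Shuffle x y v → Shuffle x (a :: y) (a :: v)

/-- An abelian square: a word of the form `v₁ v₂` with `|v₁| = |v₂|` and `v₁`, `v₂`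
having the same number of occurrences of each letter. -/
def IsAbSquare {α : Type*} [DecidableEq α] (v : List α) : Prop :=
  ∃ v₁ v₂ : List α, v = v₁ ++ v₂ ∧ v₁.length = v₂.length ∧ ∀ a, v₁.count a = v₂.count a

namespace Shuffle

variable {α : Type*} {x y v : List α}

theorem symm (h : Shuffle x y v) : Shuffle y x v := by
  induction h with
  | nil => exact nil
  | left _ ih => exact right ih
  | right _ ih => exact left ih

theorem perm_append (h : Shuffle x y v) : v.Perm (x ++ y) := by
  induction h with
  | nil => exact .nil
  | left _ ih => exact ih.cons _
  | right _ ih => exact (ih.cons _).trans List.perm_middle.symm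

theorem append {x' y' v' : List α} (h : Shuffle x y v) (h' : Shuffle x' y' v') :
    Shuffle (x ++ x') (y ++ y') (v ++ v') := by
  induction h with
  | nil => exact h'
  | left _ ih => exact left ih
  | right _ ih => exact right ih

theorem exists_split_of_eq_append (h : Shuffle x y v) {v₁ v₂ : List α} (hv : v = v₁ ++ v₂) :
    ∃ x₁ x₂ y₁ y₂, x = x₁ ++ x₂ ∧ y = y₁ ++ y₂ ∧ Shuffle x₁ y₁ v₁ ∧ Shuffle x₂ y₂ v₂ := by
  induction h generalizing v₁ with
  | nil =>
    obtain ⟨rfl, rfl⟩ := List.append_eq_nil_iff.mp hv.symm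
    exact ⟨[], [], [], [], rfl, rfl, nil, nil⟩
  | @left a x y v h ih =>
    cases v₁ with
    | nil =>
      rw [List.nil_append] at hv
      subst hv
      exact ⟨[], a :: x, [], y, rfl, rfl, nil, h.left⟩
    | cons b v₁ =>
      rw [List.cons_append, List.cons.injEq] at hv
      obtain ⟨rfl, hv⟩ := hv
      obtain ⟨x₁, x₂, y₁, y₂, rfl, rfl, h₁, h₂⟩ := ih hv
      exact ⟨a :: x₁, x₂, y₁, y₂, rfl, rfl, h₁.left, h₂⟩
  | @right a x y v h ih =>
    cases v₁ with
    | nil =>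
      rw [List.nil_append] at hv
      subst hv
      exact ⟨[], x, [], a :: y, rfl, rfl, nil, h.right⟩
    | cons b v₁ =>
      rw [List.cons_append, List.cons.injEq] at hv
      obtain ⟨rfl, hv⟩ := hv
      obtain ⟨x₁, x₂, y₁, y₂, rfl, rfl, h₁, h₂⟩ := ih hv
      exact ⟨x₁, x₂, a :: y₁, y₂, rfl, rfl, h₁.right, h₂⟩

theorem filter_filter_not (p : α → Bool) (w : List α) :
    Shuffle (w.filter p) (w.filter fun a => !p a) w := by
  induction w with
  | nil => exact nil
  | cons a w ih =>
    cases hp : p a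
    · simpa [List.filter_cons, hp] using ih.right
    · simpa [List.filter_cons, hp] using ih.left

theorem replicate_count_zero_one (w : List (Fin 2)) :
    Shuffle (List.replicate (w.count 0) 0) (List.replicate (w.count 1) 1) w := by
  have h_not_zero : (fun a : Fin 2 => !decide (a = 0)) = fun a => decide (a = 1) := by
    funext a; fin_cases a <;> rfl
  simpa only [List.filter_eq, h_not_zero] using filter_filter_not (fun a => decide (a = 0)) w

end Shuffle

theorem isAbSquare_append_of_perm {α : Type*} [DecidableEq α] {v₁ v₂ : List α}
    (h : v₁.Perm v₂) : IsAbSquare (v₁ ++ v₂) :=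
  ⟨v₁, v₂, rfl, h.length_eq, List.perm_iff_count.mp h⟩

open List in
theorem Shuffle.isAbSquare_of_reverse {α : Type*} [DecidableEq α] {u v : List α}
    (h : Shuffle u u.reverse v) : IsAbSquare v := by
  have hv : v.length = u.length + u.length := by simpa using h.perm_append.length_eq
  obtain ⟨x₁, x₂, y₁, y₂, hx, hy, h₁, h₂⟩ :=
    h.exists_split_of_eq_append (take_append_drop u.length v).symm
  have hlen₁ : x₁.length + y₁.length = u.length := by
    rw [← length_append, ← h₁.perm_append.length_eq, length_take]
    omega
  subst hx
  rw [reverse_append] at hy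
  obtain ⟨rfl, rfl⟩ := append_inj hy.symm (by simp at hlen₁ ⊢; omega)
  rw [← take_append_drop (x₁ ++ x₂).length v]
  apply isAbSquare_append_of_perm
  calc _ ~ x₁ ++ x₂.reverse := h₁.perm_append
    _ ~ x₁ ++ x₂ := (reverse_perm _).append_left _
    _ ~ x₂ ++ x₁ := perm_append_comm
    _ ~ x₂ ++ x₁.reverse := ((reverse_perm _).append_left _).symm
    _ ~ _ := h₂.perm_append.symm

theorem exists_shuffle_reverse_of_isAbSquare {v : List (Fin 2)} (h : IsAbSquare v) :
    ∃ u : List (Fin 2), Shuffle u u.reverse v := by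
  obtain ⟨v₁, v₂, rfl, -, hcount⟩ := h
  refine ⟨List.replicate (v₁.count 0) 0 ++ List.replicate (v₁.count 1) 1, ?_⟩
  have h₂ := (Shuffle.replicate_count_zero_one v₂).symm
  rw [← hcount 0, ← hcount 1] at h₂
  simpa using (Shuffle.replicate_count_zero_one v₁).append h₂

/-- A binary word is an abelian square iff it is a shuffle of some word with its
reversal; moreover, over an arbitrary alphabet, any shuffle of a word with its
reversal is an abelian square. -/
theorem stmt8 :
    (∀ v : List (Fin 2), IsAbSquare v ↔ ∃ u : List (Fin 2), Shuffle u u.reverse v) ∧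
      (∀ (α : Type) [DecidableEq α] (v : List α),
        (∃ u : List α, Shuffle u u.reverse v) → IsAbSquare v) :=
  ⟨fun _ => ⟨exists_shuffle_reverse_of_isAbSquare, fun ⟨_, hu⟩ => hu.isAbSquare_of_reverse⟩,
    fun _ _ _ ⟨_, hu⟩ => hu.isAbSquare_of_reverse⟩
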